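/- arXiv:1510.00195 — 11 statements merged into one kernel-verified Lean document; each statement's English description precedes it below -/
import Mathlib

section
/- Let -1 ≤ x_0 < x_1 < ... < x_N ≤ 1 be distinct real points, let ℓ_{j,N} be the associated Lagrange basis polynomials, and for each k ≥ 0 let D^{(k)}_{x→x} be the (N+1)×(N+1) matrix with entries ℓ_{j,N}^{(k)}(x_i) (the k-th derivative of ℓ_{j,N} evaluated at x_i). Then for every m ≥ 1, D^{(m)}_{x→x} = (D^{(1)}_{x→x})^m, i.e., the m-th order pseudospectral differentiation matrix is the m-th power of the first-order one. -/
open Polynomial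

/-- `D^{(m)}_{x→x} = (D^{(1)}_{x→x})^m` for every `m ≥ 1`. -/
theorem stmt_1 (N : ℕ)
    (x : Fin (N + 1) → ℝ) (hx : StrictMono x)
    (hx0 : -1 ≤ x 0) (hxN : x (Fin.last N) ≤ 1)
    (ℓ : Fin (N + 1) → Polynomial ℝ)
    (hdeg : ∀ j, (ℓ j).natDegree ≤ N)
    (hval : ∀ i j, (ℓ j).eval (x i) = if i = j then 1 else 0)
    (m : ℕ) (hm : 1 ≤ m) :
    (Matrix.of fun (i j : Fin (N + 1)) =>
        (Polynomial.derivative^[m] (ℓ j)).eval (x i)) =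
      (Matrix.of fun (i j : Fin (N + 1)) =>
        (Polynomial.derivative (ℓ j)).eval (x i)) ^ m := by
  -- interpolation lemma
  have interp : ∀ p : Polynomial ℝ, p.natDegree ≤ N →
      p = ∑ s : Fin (N + 1), (p.eval (x s)) • ℓ s := by
    intro p hp
    have hz : p - ∑ s : Fin (N + 1), (p.eval (x s)) • ℓ s = 0 := by
      apply Polynomial.eq_zero_of_natDegree_lt_card_of_eval_eq_zero _ hx.injective
      · intro i
        simp only [eval_sub, eval_finset_sum, eval_smul, smul_eq_mul, hval]
        simp [Finset.sum_ite_eq' Finset.univ i fun s => p.eval (x s)]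
      · have h1 : (∑ s : Fin (N + 1), (p.eval (x s)) • ℓ s).natDegree ≤ N := by
          apply Polynomial.natDegree_sum_le_of_forall_le
          intro s _
          exact (Polynomial.natDegree_smul_le _ _).trans (hdeg s)
        calc (p - ∑ s : Fin (N + 1), (p.eval (x s)) • ℓ s).natDegree
            ≤ max p.natDegree _ := Polynomial.natDegree_sub_le _ _
          _ ≤ N := max_le hp h1
          _ < Fintype.card (Fin (N + 1)) := by simp
    linear_combination (norm := ring_nf) hz
  have degit : ∀ k j, (Polynomial.derivative^[k] (ℓ j)).natDegree ≤ N := by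
    intro k j
    induction k with
    | zero => exact hdeg j
    | succ n ih =>
      rw [Function.iterate_succ_apply']
      have := Polynomial.natDegree_derivative_le ((Polynomial.derivative)^[n] (ℓ j))
      omega
  -- main induction
  induction m with
  | zero => omega
  | succ n ih =>
    rcases Nat.eq_or_lt_of_le hm with h | h
    · simp [← h]
    · have hn : 1 ≤ n := by omega
      rw [pow_succ', ← ih hn]
      ext i j
      simp only [Matrix.of_apply, Matrix.mul_apply, Matrix.of_apply]
      rw [Function.iterate_succ_apply']
      conv_lhs => rw [interp (Polynomial.derivative^[n] (ℓ j)) (degit n j)]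
      rw [map_sum]
      simp [eval_finset_sum, mul_comm]
end

section
/- Let -1 ≤ x_0 < x_1 < ... < x_N ≤ 1 and -1 ≤ y_0 < y_1 < ... < y_M ≤ 1 be distinct real points, and let ℓ_{j,N} be the Lagrange basis polynomials for {x_j}. Let D^{(m)}_{x→x} = [ℓ_{j,N}^{(m)}(x_i)]_{i,j=0}^N, let D^{(m)}_{x→y} = [ℓ_{j,N}^{(m)}(y_i)] for i = 0,...,M, j = 0,...,N, and let P^{x→y} = [ℓ_{j,N}(y_i)] be the (M+1)×(N+1) resampling matrix. Then for every m ≥ 0, D^{(m)}_{x→y} = P^{x→y} · D^{(m)}_{x→x}. -/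
open Polynomial

/-- `D^{(m)}_{x→y} = P^{x→y} · D^{(m)}_{x→x}` for every `m ≥ 0`. -/
theorem stmt_2 (M N : ℕ)
    (x : Fin (N + 1) → ℝ) (y : Fin (M + 1) → ℝ)
    (hx : StrictMono x) (hy : StrictMono y)
    (hx0 : -1 ≤ x 0) (hxN : x (Fin.last N) ≤ 1)
    (hy0 : -1 ≤ y 0) (hyM : y (Fin.last M) ≤ 1)
    (ℓ : Fin (N + 1) → Polynomial ℝ)
    (hdeg : ∀ j, (ℓ j).natDegree ≤ N)
    (hval : ∀ i j, (ℓ j).eval (x i) = if i = j then 1 else 0)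
    (m : ℕ) :
    (Matrix.of fun (i : Fin (M + 1)) (j : Fin (N + 1)) =>
        (Polynomial.derivative^[m] (ℓ j)).eval (y i)) =
      (Matrix.of fun (i : Fin (M + 1)) (j : Fin (N + 1)) => (ℓ j).eval (y i)) *
        (Matrix.of fun (i j : Fin (N + 1)) =>
          (Polynomial.derivative^[m] (ℓ j)).eval (x i)) := by
  classical
  -- Key: any polynomial p with natDegree ≤ N equals ∑ k, C (p.eval (x k)) * ℓ k.
  have key : ∀ p : Polynomial ℝ, p.natDegree ≤ N →
      p = ∑ k, Polynomial.C (p.eval (x k)) * ℓ k := by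
    intro p hp
    have hz : p - ∑ k, Polynomial.C (p.eval (x k)) * ℓ k = 0 := by
      apply Polynomial.eq_zero_of_natDegree_lt_card_of_eval_eq_zero _ hx.injective
      · intro i
        simp only [Polynomial.eval_sub, Polynomial.eval_finset_sum, Polynomial.eval_mul,
          Polynomial.eval_C, hval]
        simp
      · calc (p - ∑ k, Polynomial.C (p.eval (x k)) * ℓ k).natDegree
            ≤ max p.natDegree (∑ k, Polynomial.C (p.eval (x k)) * ℓ k).natDegree :=
            Polynomial.natDegree_sub_le _ _
          _ ≤ N := by
            apply max_le hp
            apply le_trans (Polynomial.natDegree_sum_le _ _)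
            apply (Finset.fold_max_le N).mpr
            refine ⟨Nat.zero_le _, fun k _ => ?_⟩
            exact le_trans Polynomial.natDegree_mul_le (by simp [hdeg k])
          _ < Fintype.card (Fin (N + 1)) := by simp
    exact sub_eq_zero.mp hz
  ext i j
  have hp : (Polynomial.derivative^[m] (ℓ j)).natDegree ≤ N :=
    le_trans (le_trans (Polynomial.natDegree_iterate_derivative (ℓ j) m)
      (Nat.sub_le _ _)) (hdeg j)
  have := key _ hp
  simp only [Matrix.mul_apply, Matrix.of_apply]
  conv_lhs => rw [this]
  simp [Polynomial.eval_finset_sum, mul_comm]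
end

section
/- Let m ≥ 1, M ≥ 0 and N = M + m. Let -1 ≤ x_0 < x_1 < ... < x_N ≤ 1 and -1 ≤ y_0 < y_1 < ... < y_M ≤ 1 be distinct real points, and let ℓ_{j,N} be the Lagrange basis polynomials for {x_j}. Let B_0, ..., B_N be real polynomials of degree at most N such that B_j^{(m)}(y_i) = δ_{ij} for all i = 0,...,M and j = 0,...,N (in particular B_j^{(m)}(y_i) = 0 for j > M). Let L be an m×(N+1) real matrix such that for each j = 0,...,N, the vector L·(B_j(x_0), ..., B_j(x_N))^T equals the standard basis vector e_{j-M} of ℝ^m if M+1 ≤ j ≤ N, and equals the zero vector if 0 ≤ j ≤ M. Let B^{(-m)} be the (N+1)×(N+1) matrix with entries B_j(x_i), and let D^{(m)}_{x→y} = [ℓ_{j,N}^{(m)}(y_i)] (i = 0,...,M, j = 0,...,N). Then the (N+1)×(N+1) matrix obtained by stacking D^{(m)}_{x→y} on top of L, multiplied on the right by B^{(-m)}, equals the identity matrix I_{N+1}. -/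
open Polynomial

/-- Theorem 3.1 of the paper: stacking the rectangular differentiation
matrix `D^{(m)}_{x→y}` on top of the constraint matrix `L` and multiplying on the
right by the pseudospectral integration matrix `B^{(-m)}` gives the identity. -/
theorem stmt_5 (m M N : ℕ) (hm : 1 ≤ m) (hN : N = M + m)
    (x : Fin (N + 1) → ℝ) (y : Fin (M + 1) → ℝ)
    (hx : StrictMono x) (hy : StrictMono y)
    (hx0 : -1 ≤ x 0) (hxN : x (Fin.last N) ≤ 1)
    (hy0 : -1 ≤ y 0) (hyM : y (Fin.last M) ≤ 1)
    (ℓ : Fin (N + 1) → Polynomial ℝ)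
    (hdeg : ∀ j, (ℓ j).natDegree ≤ N)
    (hval : ∀ i j, (ℓ j).eval (x i) = if i = j then 1 else 0)
    (B : Fin (N + 1) → Polynomial ℝ)
    (hBdeg : ∀ j, (B j).natDegree ≤ N)
    (hBder : ∀ (i : Fin (M + 1)) (j : Fin (N + 1)),
      (Polynomial.derivative^[m] (B j)).eval (y i) = if (i : ℕ) = (j : ℕ) then 1 else 0)
    (L : Matrix (Fin m) (Fin (N + 1)) ℝ)
    (hL0 : ∀ j : Fin (N + 1), (j : ℕ) ≤ M →
      L.mulVec (fun i => (B j).eval (x i)) = 0)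
    (hL1 : ∀ j : Fin (N + 1), (hj : M + 1 ≤ (j : ℕ)) →
      L.mulVec (fun i => (B j).eval (x i)) =
        Pi.single (⟨(j : ℕ) - (M + 1), by have := j.isLt; omega⟩ : Fin m) 1) :
    (Matrix.of fun (i j : Fin (N + 1)) =>
        if h : (i : ℕ) < M + 1 then
          (Polynomial.derivative^[m] (ℓ j)).eval (y ⟨(i : ℕ), h⟩)
        else
          L ⟨(i : ℕ) - (M + 1), by have := i.isLt; omega⟩ j) *
      (Matrix.of fun (i j : Fin (N + 1)) => (B j).eval (x i)) =
      (1 : Matrix (Fin (N + 1)) (Fin (N + 1)) ℝ) := by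
  -- Key: Lagrange interpolation reproduces each B k
  have key : ∀ k : Fin (N + 1), (∑ j, C ((B k).eval (x j)) * ℓ j) = B k := by
    intro k
    have hsub : (∑ j, C ((B k).eval (x j)) * ℓ j) - B k = 0 := by
      apply Polynomial.eq_zero_of_natDegree_lt_card_of_eval_eq_zero _ hx.injective
      · intro i
        simp only [eval_sub, eval_finset_sum, eval_mul, eval_C, hval]
        rw [Finset.sum_eq_single i]
        · simp
        · intro b _ hb
          simp [Ne.symm hb]
        · simp
      · have h1 : (∑ j, C ((B k).eval (x j)) * ℓ j).natDegree ≤ N := by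
          apply Polynomial.natDegree_sum_le_of_forall_le
          intro j _
          exact le_trans (natDegree_mul_le) (by simpa using hdeg j)
        have h2 := hBdeg k
        have := Polynomial.natDegree_sub_le (∑ j, C ((B k).eval (x j)) * ℓ j) (B k)
        simp only [Fintype.card_fin]
        omega
    linear_combination (norm := ring_nf) hsub
  ext i k
  simp only [Matrix.mul_apply, Matrix.of_apply, Matrix.one_apply]
  by_cases h : (i : ℕ) < M + 1
  · simp only [dif_pos h]
    have := hBder ⟨(i : ℕ), h⟩ k
    rw [← key k] at this
    have hsum : (Polynomial.derivative^[m] (∑ j, C ((B k).eval (x j)) * ℓ j))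
        = ∑ j, C ((B k).eval (x j)) * Polynomial.derivative^[m] (ℓ j) := by
      rw [Polynomial.iterate_derivative_sum]
      exact Finset.sum_congr rfl fun j _ => Polynomial.iterate_derivative_C_mul _ _ _
    rw [hsum] at this
    simp only [eval_finset_sum, eval_mul, eval_C] at this
    rw [show (if i = k then (1:ℝ) else 0) = if (i:ℕ) = (k:ℕ) then 1 else 0 by
      simp [Fin.ext_iff], ← this]
    exact Finset.sum_congr rfl fun j _ => mul_comm _ _
  · simp only [dif_neg h]
    by_cases hk : (k : ℕ) ≤ M
    · have h0 := congrFun (hL0 k hk) ⟨(i : ℕ) - (M + 1), by have := i.isLt; omega⟩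
      simp only [Matrix.mulVec, dotProduct, Pi.zero_apply] at h0
      rw [h0]
      have : i ≠ k := by intro he; rw [he] at h; omega
      simp [this]
    · push_neg at hk
      have h1 := congrFun (hL1 k hk) ⟨(i : ℕ) - (M + 1), by have := i.isLt; omega⟩
      simp only [Matrix.mulVec, dotProduct] at h1
      rw [h1, Pi.single_apply]
      have : (⟨(i : ℕ) - (M + 1), by have := i.isLt; omega⟩ : Fin m)
          = ⟨(k : ℕ) - (M + 1), by have := k.isLt; omega⟩ ↔ i = k := by
        simp only [Fin.ext_iff]
        omega
      rw [if_congr this rfl rfl]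
end

section
/- Let N ≥ 0 and let ν_{j,N} = -cos((2j+1)π/(2N+2)) for j = 0, 1, ..., N be the Chebyshev points of the first kind. Then for every real polynomial p of degree at most 2N+1, ∫_{-1}^{1} p(x)/√(1-x²) dx = Σ_{j=0}^{N} (π/(N+1)) · p(ν_{j,N}). -/
open Polynomial Real

/-! The weight `1 / √(1 - x ^ 2)` turns into Lebesgue measure on `[0, π]` under `x = cos θ`, where
`Tₖ(cos θ) = cos (k θ)`; the discrete cosine sums `∑ⱼ cos (k (2j+1)π / (2N+2))` vanish for
`0 < k < 2N + 2` exactly as `∫₀^π cos (k θ) dθ` does, and the Chebyshev polynomials `T₀, …, T_{2N+1}`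
span the polynomials of degree `≤ 2N + 1`. This is Mathlib's
`Polynomial.Chebyshev.integral_eq_sumZeroes`; its nodes `cos ((2i+1)π / (2N+2))` are the points
`ν_{j,N}` listed in reverse order. -/

lemma neg_cos_eq_cos_reflect (j : ℝ) {N : ℝ} (hN : N + 1 ≠ 0) :
    -cos ((2 * j + 1) * π / (2 * N + 2)) = cos ((2 * (N - j) + 1) / (2 * (N + 1)) * π) := by
  rw [← cos_pi_sub]
  congr 1
  field_simp
  ring

/-- Gauss–Chebyshev quadrature at the Chebyshev points of the first kind
is exact for polynomials of degree at most `2N+1`. -/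
theorem stmt_7 (N : ℕ) (p : Polynomial ℝ) (hp : p.natDegree ≤ 2 * N + 1) :
    ∫ x in (-1 : ℝ)..1, p.eval x / Real.sqrt (1 - x ^ 2) =
      ∑ j : Fin (N + 1),
        (π / (N + 1)) *
          p.eval (-Real.cos ((2 * (j : ℝ) + 1) * π / (2 * (N : ℝ) + 2))) := by
  have hdeg : p.degree < 2 * (N + 1 : ℕ) :=
    (degree_le_of_natDegree_le hp).trans_lt (by exact_mod_cast (by omega : 2 * N + 1 < 2 * (N + 1)))
  calc ∫ x in (-1 : ℝ)..1, p.eval x / √(1 - x ^ 2)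
      = ∫ x, p.eval x ∂Chebyshev.measureT := by
        simp_rw [Chebyshev.integral_measureT, sqrt_inv, div_eq_mul_inv]
    _ = Chebyshev.sumZeroes (N + 1) p := Chebyshev.integral_eq_sumZeroes N.succ_ne_zero hdeg
    _ = _ := by
        rw [Chebyshev.sumZeroes, Finset.mul_sum, ← Fin.sum_univ_eq_sum_range,
          ← Equiv.sum_comp Fin.revPerm]
        refine Finset.sum_congr rfl fun j _ => ?_
        rw [neg_cos_eq_cos_reflect _ (by positivity), Fin.revPerm_apply, Fin.val_rev,
          Nat.cast_sub (by omega)]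
        push_cast
        ring_nf
end

section
/- Let N ≥ 1 and let τ_{j,N} = -cos(jπ/N) for j = 0, 1, ..., N be the Chebyshev points of the second kind. Set ρ_0 = ρ_N = 2 and ρ_j = 1 for 1 ≤ j ≤ N-1. Then for every real polynomial p of degree at most 2N-1, ∫_{-1}^{1} p(x)/√(1-x²) dx = Σ_{j=0}^{N} (π/(ρ_j N)) · p(τ_{j,N}). -/
/-!
Substituting `x = cos θ` turns the weighted integral into `∫₀^π p(cos θ) dθ`, and both sides
are linear in `p`, so it suffices to treat the Chebyshev polynomials `T_k`, `k ≤ 2N - 1`, which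
span the polynomials of degree at most `2N - 1`. Since `T_k(cos θ) = cos (kθ)`, the integral of
`T_k` is `π` for `k = 0` and `0` otherwise, while the quadrature sum is, up to the sign `(-1)^k`,
the trapezoidal sum of `cos (kθ)` at `θ = jπ/N`; for `0 < k < 2N` it vanishes by telescoping
against `sin (kπ/(2N)) ≠ 0`.
-/

open Polynomial Real

namespace Polynomial.Chebyshev

open Finset MeasureTheory

noncomputable def lobattoRho (N j : ℕ) : ℝ := if j = 0 ∨ j = N then 2 else 1

/-- The nodes `-cos (jπ/N)`, `0 ≤ j ≤ N`, are the extrema of `T N` on `[-1, 1]`. -/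
noncomputable def sumExtrema (N : ℕ) : ℝ[X] →ₗ[ℝ] ℝ :=
  ∑ j ∈ range (N + 1), (π / (lobattoRho N j * N)) • leval (-cos (j * π / N))

theorem sumExtrema_apply (N : ℕ) (P : ℝ[X]) :
    sumExtrema N P =
      ∑ j ∈ range (N + 1), π / (lobattoRho N j * N) * P.eval (-cos (j * π / N)) := by
  simp [sumExtrema]

theorem sum_range_succ_pi_div_lobattoRho_mul {N : ℕ} (hN : N ≠ 0) (g : ℕ → ℝ) :
    ∑ j ∈ range (N + 1), π / (lobattoRho N j * N) * g j =
      π / N * (∑ j ∈ range (N + 1), g j - (g 0 + g N) / 2) := by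
  have hinterior : ∀ j ∈ Ico 1 N, π / (lobattoRho N j * N) * g j = π / N * g j := by
    intro j hj
    rw [lobattoRho, if_neg (by grind), one_mul]
  rw [sum_range_succ, sum_range_eq_add_Ico _ (Nat.pos_of_ne_zero hN), sum_range_succ,
    sum_range_eq_add_Ico _ (Nat.pos_of_ne_zero hN), sum_congr rfl hinterior, ← mul_sum]
  simp only [lobattoRho, true_or, or_true, ↓reduceIte]
  ring

theorem sum_range_succ_cos_nat_mul_pi_div {N k : ℕ} (hk₀ : 0 < k) (hk : k < 2 * N) :
    ∑ j ∈ range (N + 1), cos (k * j * π / N) = (1 + cos (k * π)) / 2 := by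
  have hN : (N : ℝ) ≠ 0 := by norm_cast; omega
  set e : ℝ := k * π / (2 * N) with he
  have hsin : 0 < sin e := by
    apply sin_pos_of_pos_of_lt_pi (by positivity)
    rw [he, div_lt_iff₀ (by positivity)]
    have : (k : ℝ) < 2 * N := by exact_mod_cast hk
    nlinarith [pi_pos]
  have htelescope : ∀ j : ℕ, 2 * sin e * cos (k * j * π / N) =
      sin ((2 * (j + 1 : ℕ) - 1) * e) - sin ((2 * j - 1) * e) := by
    intro j
    have hlow : e - k * j * π / N = -((2 * j - 1) * e) := by rw [he]; field_simp; ring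
    have hhigh : e + k * j * π / N = (2 * (j + 1 : ℕ) - 1) * e := by
      rw [he]; push_cast; field_simp; ring
    rw [two_mul_sin_mul_cos, hlow, hhigh, sin_neg]
    ring
  have hlast : (2 * (N + 1 : ℕ) - 1) * e = k * π + e := by rw [he]; push_cast; field_simp; ring
  apply mul_left_cancel₀ (mul_ne_zero two_ne_zero hsin.ne')
  rw [mul_sum, sum_congr rfl fun j _ => htelescope j,
    sum_range_sub (fun j : ℕ => sin ((2 * j - 1) * e)), hlast, sin_add, sin_nat_mul_pi]
  simp only [Nat.cast_zero, mul_zero, zero_sub, neg_one_mul, sin_neg]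
  ring

theorem sumExtrema_T_zero {N : ℕ} (hN : N ≠ 0) : sumExtrema N (T ℝ 0) = π := by
  rw [sumExtrema_apply, sum_range_succ_pi_div_lobattoRho_mul hN]
  simp only [T_zero, eval_one, sum_const, card_range, nsmul_eq_mul, Nat.cast_add, Nat.cast_one,
    mul_one, add_self_div_two, add_sub_cancel_right]
  field_simp

theorem sumExtrema_T_of_pos_of_lt {N k : ℕ} (hk₀ : 0 < k) (hk : k < 2 * N) :
    sumExtrema N (T ℝ k) = 0 := by
  have hN : N ≠ 0 := by omega
  have hnode (j : ℕ) : (T ℝ k).eval (-cos (j * π / N)) = (-1) ^ k * cos (k * j * π / N) := by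
    rw [T_eval_neg, T_real_cos, Int.cast_negOnePow_natCast]
    push_cast
    ring_nf
  rw [sumExtrema_apply, sum_range_succ_pi_div_lobattoRho_mul hN]
  simp only [hnode]
  rw [← mul_sum, sum_range_succ_cos_nat_mul_pi_div hk₀ hk]
  field_simp
  simp

theorem integral_measureT_eq_sumExtrema {N : ℕ} (hN : N ≠ 0) {P : ℝ[X]}
    (hP : P.natDegree ≤ 2 * N - 1) : ∫ x, P.eval x ∂measureT = sumExtrema N P := by
  have hmem : P ∈ Submodule.span ℝ (chebyshevTsequence ℝ '' Set.Iic (2 * N - 1)) := by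
    rwa [Sequence.span_degreeLE _ (by simp), mem_degreeLE, ← natDegree_le_iff_degree_le]
  clear hP
  induction hmem using Submodule.span_induction with
  | mem Q hQ =>
    obtain ⟨k, hk, rfl⟩ := hQ
    simp only [chebyshevTsequence, Set.mem_Iic] at hk ⊢
    rcases Nat.eq_zero_or_pos k with rfl | hk₀
    · rw [Nat.cast_zero, integral_eval_T_real_measureT_zero, sumExtrema_T_zero hN]
    · rw [integral_eval_T_real_measureT_of_ne_zero (by omega),
        sumExtrema_T_of_pos_of_lt hk₀ (by omega)]
  | zero => simp
  | add Q R _ _ hQ hR =>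
    rw [map_add, ← hQ, ← hR, ← integral_add (integrable_measureT (by fun_prop))
      (integrable_measureT (by fun_prop))]
    simp only [eval_add]
  | smul c Q _ hQ =>
    simp only [eval_smul, smul_eq_mul, map_smul, integral_const_mul]
    rw [hQ]

theorem intervalIntegral_div_sqrt_one_sub_sq_eq_integral_measureT (f : ℝ → ℝ) :
    ∫ x in (-1 : ℝ)..1, f x / √(1 - x ^ 2) = ∫ x, f x ∂measureT := by
  simp [integral_measureT, sqrt_inv, div_eq_mul_inv]

end Polynomial.Chebyshev

/-- Gauss–Chebyshev–Lobatto quadrature at the Chebyshev points of the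
second kind is exact for polynomials of degree at most `2N-1`. -/
theorem stmt_8 (N : ℕ) (hN : 1 ≤ N) (p : Polynomial ℝ) (hp : p.natDegree ≤ 2 * N - 1)
    (ρ : Fin (N + 1) → ℝ)
    (hρ0 : ρ 0 = 2) (hρN : ρ (Fin.last N) = 2)
    (hρ : ∀ j : Fin (N + 1), 1 ≤ (j : ℕ) → (j : ℕ) ≤ N - 1 → ρ j = 1) :
    ∫ x in (-1 : ℝ)..1, p.eval x / Real.sqrt (1 - x ^ 2) =
      ∑ j : Fin (N + 1),
        (π / (ρ j * N)) * p.eval (-Real.cos ((j : ℝ) * π / (N : ℝ))) := by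
  have hρ_eq (j : Fin (N + 1)) : ρ j = Chebyshev.lobattoRho N j := by
    unfold Chebyshev.lobattoRho
    split_ifs with hend
    · rcases hend with h | h
      · rw [show j = 0 from Fin.ext h, hρ0]
      · rw [show j = Fin.last N from Fin.ext h, hρN]
    · exact hρ j (by omega) (by omega)
  rw [Chebyshev.intervalIntegral_div_sqrt_one_sub_sq_eq_integral_measureT,
    Chebyshev.integral_measureT_eq_sumExtrema (by omega) hp, Chebyshev.sumExtrema_apply,
    ← Fin.sum_univ_eq_sum_range
      (fun j => π / (Chebyshev.lobattoRho N j * N) * p.eval (-cos (j * π / N)))]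
  simp only [hρ_eq]
end

section
/- Let N ≥ 0 and let ν_{j,N} = -cos((2j+1)π/(2N+2)) for j = 0, 1, ..., N be the Chebyshev points of the first kind. Then for every j = 0, ..., N, the barycentric weight w_{j,N} = Π_{n=0, n≠j}^{N} (ν_{j,N} - ν_{n,N})^{-1} satisfies w_{j,N} = (-1)^{N-j} · (2^N/(N+1)) · sin((2j+1)π/(2N+2)). -/
/-!
The Chebyshev points of the first kind are the `N + 1` distinct roots of `T_{N+1}`, whose leading
coefficient is `2 ^ N`, so `T_{N+1} = 2 ^ N ∏ₙ (X - νₙ)` and the barycentric weight `w_j` is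
`2 ^ N / T'_{N+1}(ν_j) = 2 ^ N / ((N + 1) U_N(ν_j))`. Writing `ν_j = cos φ` with
`(N + 1) φ = (N - j) π + π / 2`, the identity `U_N(cos φ) sin φ = sin ((N + 1) φ)` gives
`U_N(ν_j) sin φ = (-1) ^ (N - j)`, and `sin φ = sin ((2j + 1) π / (2N + 2))`.
-/

open Real Polynomial Chebyshev Lagrange Finset

namespace Lagrange

variable {F ι : Type*} [Field F] {s : Finset ι} {v : ι → F} {p : F[X]}

theorem eq_C_leadingCoeff_mul_nodal (hvs : Set.InjOn v s) (hdeg : p.degree = #s)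
    (hroot : ∀ i ∈ s, p.eval (v i) = 0) : p = C p.leadingCoeff * nodal s v := by
  have hp : p.leadingCoeff ≠ 0 := leadingCoeff_ne_zero.mpr (ne_zero_of_coe_le_degree hdeg.ge)
  refine eq_of_degree_le_of_eval_index_eq s hvs hdeg.le ?_ ?_ fun i hi => ?_
  · rw [degree_C_mul hp, degree_nodal, hdeg]
  · rw [leadingCoeff_C_mul_of_isUnit hp.isUnit, nodal_monic.leadingCoeff, mul_one]
  · rw [eval_mul, eval_nodal_at_node hi, hroot i hi, mul_zero]

theorem nodalWeight_eq_leadingCoeff_mul_inv_eval_derivative [DecidableEq ι]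
    (hvs : Set.InjOn v s) (hdeg : p.degree = #s) (hroot : ∀ i ∈ s, p.eval (v i) = 0) {i : ι}
    (hi : i ∈ s) : nodalWeight s v i = p.leadingCoeff * (p.derivative.eval (v i))⁻¹ := by
  have hp : p.leadingCoeff ≠ 0 := leadingCoeff_ne_zero.mpr (ne_zero_of_coe_le_degree hdeg.ge)
  have hderiv : p.derivative.eval (v i) = p.leadingCoeff * (nodal s v).derivative.eval (v i) := by
    conv_lhs => rw [eq_C_leadingCoeff_mul_nodal hvs hdeg hroot]
    rw [derivative_C_mul, eval_mul, eval_C]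
  rw [hderiv, nodalWeight_eq_eval_derivative_nodal hi, mul_inv, mul_inv_cancel_left₀ hp]

end Lagrange

theorem nodalWeight_eq_of_eval_T_eq_zero {ι : Type*} [DecidableEq ι] {s : Finset ι}
    {v : ι → ℝ} {N : ℕ} (hvs : Set.InjOn v s) (hcard : #s = N + 1)
    (hroot : ∀ i ∈ s, (T ℝ (N + 1 : ℕ)).eval (v i) = 0) {i : ι} (hi : i ∈ s) :
    nodalWeight s v i = 2 ^ N / ((N + 1) * (U ℝ N).eval (v i)) := by
  rw [nodalWeight_eq_leadingCoeff_mul_inv_eval_derivative hvs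
    (by rw [degree_T, Int.natAbs_natCast, hcard]) hroot hi,
    leadingCoeff_T, Int.natAbs_natCast, T_derivative_eq_U]
  simp [div_eq_mul_inv]

noncomputable def chebyshevAngle (N k : ℕ) : ℝ := (2 * k + 1) * π / (2 * N + 2)

theorem chebyshevAngle_mem_Ioo {N k : ℕ} (hk : k ≤ N) : chebyshevAngle N k ∈ Set.Ioo 0 π := by
  have hk' : (k : ℝ) ≤ N := by exact_mod_cast hk
  constructor
  · unfold chebyshevAngle; positivity
  · rw [chebyshevAngle, div_lt_iff₀ (by positivity)]; nlinarith [pi_pos]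

theorem succ_mul_chebyshevAngle (N k : ℕ) :
    ((N : ℝ) + 1) * chebyshevAngle N k = k * π + π / 2 := by
  unfold chebyshevAngle; field_simp

theorem pi_sub_chebyshevAngle {N k : ℕ} (hk : k ≤ N) :
    π - chebyshevAngle N k = chebyshevAngle N (N - k) := by
  unfold chebyshevAngle; rw [Nat.cast_sub hk]; field_simp; ring

theorem injOn_cos_chebyshevAngle (N : ℕ) :
    Set.InjOn (fun k => cos (chebyshevAngle N k)) (Set.Iic N) := by
  intro a ha b hb hab
  have := injOn_cos (Set.Ioo_subset_Icc_self (chebyshevAngle_mem_Ioo ha))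
    (Set.Ioo_subset_Icc_self (chebyshevAngle_mem_Ioo hb)) hab
  unfold chebyshevAngle at this
  field_simp at this
  exact_mod_cast (by linarith : (a : ℝ) = b)

theorem eval_T_cos_chebyshevAngle (N k : ℕ) :
    (T ℝ (N + 1 : ℕ)).eval (cos (chebyshevAngle N k)) = 0 := by
  rw [T_real_cos]; push_cast
  rw [succ_mul_chebyshevAngle, cos_add_pi_div_two, sin_nat_mul_pi, neg_zero]

theorem eval_U_cos_chebyshevAngle_mul_sin (N k : ℕ) :
    (U ℝ N).eval (cos (chebyshevAngle N k)) * sin (chebyshevAngle N k) = (-1) ^ k := by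
  rw [U_real_cos]; push_cast
  rw [succ_mul_chebyshevAngle, sin_add_pi_div_two, cos_nat_mul_pi]

/-- explicit formula for the barycentric weights associated with the
Chebyshev points of the first kind. -/
theorem stmt_9 (N : ℕ) (ν : Fin (N + 1) → ℝ)
    (hν : ∀ j, ν j = -Real.cos ((2 * (j : ℝ) + 1) * π / (2 * (N : ℝ) + 2)))
    (j : Fin (N + 1)) :
    (∏ n ∈ Finset.univ.erase j, (ν j - ν n)⁻¹) =
      (-1 : ℝ) ^ (N - (j : ℕ)) * (2 ^ N / (N + 1)) *
        Real.sin ((2 * (j : ℝ) + 1) * π / (2 * (N : ℝ) + 2)) := by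
  have hνcos (n : Fin (N + 1)) : ν n = cos (chebyshevAngle N (N - n)) := by
    rw [hν, ← pi_sub_chebyshevAngle n.is_le, cos_pi_sub]; rfl
  have hinj : Set.InjOn ν (Finset.univ : Finset (Fin (N + 1))) := fun a _ b _ hab => Fin.ext <|
    injOn_cos_chebyshevAngle N a.is_le b.is_le (by simpa [hν, chebyshevAngle] using hab)
  have hroot (n : Fin (N + 1)) (_ : n ∈ univ) : (T ℝ (N + 1 : ℕ)).eval (ν n) = 0 := by
    rw [hνcos]; exact eval_T_cos_chebyshevAngle N _
  have hU := eval_U_cos_chebyshevAngle_mul_sin N (N - j)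
  rw [← hνcos, ← pi_sub_chebyshevAngle j.is_le, sin_pi_sub] at hU
  have hsin : sin (chebyshevAngle N j) ≠ 0 :=
    (sin_pos_of_mem_Ioo (chebyshevAngle_mem_Ioo j.is_le)).ne'
  change nodalWeight univ ν j = _ * _ * sin (chebyshevAngle N j)
  rw [nodalWeight_eq_of_eval_T_eq_zero hinj (card_fin _) hroot (mem_univ j),
    eq_div_of_mul_eq hsin hU]
  field_simp
  rw [← pow_mul, Even.neg_one_pow (by simp)]
end

section
/- Let N ≥ 1 and let τ_{j,N} = -cos(jπ/N) for j = 0, 1, ..., N be the Chebyshev points of the second kind. Set ρ_0 = ρ_N = 2 and ρ_j = 1 for 1 ≤ j ≤ N-1. Then for every j = 0, ..., N, the barycentric weight w_{j,N} = Π_{n=0, n≠j}^{N} (τ_{j,N} - τ_{n,N})^{-1} satisfies w_{j,N} = (-1)^{N-j} · 2^{N-1}/(ρ_j N). -/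
open Real

/-!
Up to order, the nodes `τ_j` are the points `cos (kπ/N)`, `0 ≤ k ≤ N`, where `T_N` takes the
values `±1`; they are the zeros of `p = (1 - X²) T_N'`, which has degree `N + 1` and leading
coefficient `-N 2^(N-1)`. Hence `p` is that multiple of the nodal polynomial `ℓ`, and
`w_j = 1 / ℓ'(τ_j)`. The Chebyshev differential equation gives `p' = -X T_N' - N² T_N`. At an
interior node `T_N'` vanishes, so `p' = -N² T_N = ∓N²`; at `x = ±1` the product rule also gives
`p'(x) = -2x T_N'(x)`, and eliminating `T_N'(x)` doubles the value: this is where `ρ_j = 2`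
comes from.
-/

open Polynomial Finset in
theorem Lagrange.nodal_eq_C_inv_leadingCoeff_mul {F ι : Type*} [Field F] {s : Finset ι}
    {v : ι → F} (hvs : Set.InjOn v s) {p : F[X]} (hdeg : p.degree = #s)
    (hroot : ∀ i ∈ s, p.eval (v i) = 0) :
    nodal s v = C p.leadingCoeff⁻¹ * p := by
  have hlc : p.leadingCoeff ≠ 0 := leadingCoeff_ne_zero.mpr (by rintro rfl; simp at hdeg)
  refine eq_of_degree_le_of_eval_index_eq s hvs degree_nodal.le ?_ ?_ ?_
  · rw [degree_C_mul (inv_ne_zero hlc), hdeg, degree_nodal]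
  · rw [leadingCoeff_C_mul_of_isUnit (inv_ne_zero hlc).isUnit, inv_mul_cancel₀ hlc,
      nodal_monic.leadingCoeff]
  · intro i hi
    rw [eval_nodal_at_node hi, eval_mul, hroot i hi, mul_zero]

namespace Polynomial.Chebyshev

section CommRing

variable {R : Type*} [CommRing R]

theorem derivative_one_sub_X_sq_mul_derivative_T (n : ℤ) :
    derivative ((1 - X ^ 2) * derivative (T R n)) =
      -(X * derivative (T R n)) - (n ^ 2 : R[X]) * T R n := by
  have h := one_sub_X_sq_mul_derivative_derivative_T_eq_poly_in_T (R := R) n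
  rw [Function.iterate_succ, Function.iterate_one, Function.comp_apply] at h
  rw [derivative_mul, h, derivative_sub, derivative_one, derivative_X_sq, C_ofNat]
  ring

theorem eval_derivative_one_sub_X_sq_mul_derivative_T_of_sq_eq_one (n : ℤ) {x : R}
    (hx : x ^ 2 = 1) :
    (derivative ((1 - X ^ 2) * derivative (T R n))).eval x = -2 * n ^ 2 * (T R n).eval x := by
  have h := congrArg (eval x) (derivative_one_sub_X_sq_mul_derivative_T (R := R) n)
  rw [derivative_mul] at h ⊢
  simp only [eval_add, eval_mul, eval_sub, eval_neg, eval_one, eval_pow, eval_X, derivative_sub,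
    derivative_one, derivative_X_sq, eval_C, hx, eval_intCast, eval_zero] at h ⊢
  linear_combination 2 * h

theorem derivative_T_natCast_eq_C_mul_U {n : ℕ} (hn : n ≠ 0) :
    derivative (T R n) = Polynomial.C (n : R) * U R ↑(n - 1) := by
  rw [T_derivative_eq_U, Int.cast_natCast, ← C_eq_natCast, Nat.cast_pred (Nat.pos_of_ne_zero hn)]

variable [IsDomain R] [CharZero R]

theorem degree_one_sub_X_sq_mul_derivative_T {n : ℕ} (hn : n ≠ 0) :
    ((1 - X ^ 2) * derivative (T R n)).degree = ↑(n + 1) := by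
  rw [derivative_T_natCast_eq_C_mul_U hn, ← neg_sub, ← C_1, degree_mul, degree_neg,
    degree_X_pow_sub_C two_pos, degree_C_mul (Nat.cast_ne_zero.mpr hn), degree_U_natCast]
  norm_cast
  omega

theorem leadingCoeff_one_sub_X_sq_mul_derivative_T {n : ℕ} (hn : n ≠ 0) :
    ((1 - X ^ 2) * derivative (T R n)).leadingCoeff = -(n * 2 ^ (n - 1) : R) := by
  rw [derivative_T_natCast_eq_C_mul_U hn, ← neg_sub, leadingCoeff_mul, leadingCoeff_neg,
    leadingCoeff_X_pow_sub_one two_pos, leadingCoeff_mul, leadingCoeff_C, leadingCoeff_U_natCast]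
  ring

end CommRing

theorem eval_cos_one_sub_X_sq_mul_derivative_T (n : ℤ) (θ : ℝ) :
    ((1 - X ^ 2) * derivative (T ℝ n)).eval (cos θ) = n * sin θ * sin (n * θ) := by
  have h := U_real_cos θ (n - 1)
  rw [Int.cast_sub, Int.cast_one, sub_add_cancel] at h
  rw [T_derivative_eq_U, eval_mul, eval_mul, eval_intCast, ← h]
  simp only [eval_sub, eval_one, eval_pow, eval_X, ← sin_sq]
  ring

theorem eval_one_sub_X_sq_mul_derivative_T_node {N : ℕ} (hN : N ≠ 0) (k : ℕ) :
    ((1 - X ^ 2) * derivative (T ℝ N)).eval (node N k) = 0 := by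
  rw [node, eval_cos_one_sub_X_sq_mul_derivative_T, Int.cast_natCast,
    mul_div_cancel₀ _ (Nat.cast_ne_zero.mpr hN), sin_nat_mul_pi, mul_zero]

theorem eval_derivative_T_node_eq_zero {N k : ℕ} (hk₀ : 0 < k) (hkN : k < N) :
    (derivative (T ℝ N)).eval (node N k) = 0 := by
  have hsin : sin (k * π / N) ≠ 0 := by
    have hk₀' : (0 : ℝ) < k := by exact_mod_cast hk₀
    have hkN' : (k : ℝ) < N := by exact_mod_cast hkN
    have hN' : (0 : ℝ) < N := hk₀'.trans hkN'
    refine (sin_pos_of_pos_of_lt_pi (by positivity) ?_).ne'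
    rw [div_lt_iff₀ hN', mul_comm]
    gcongr
  have h := eval_one_sub_X_sq_mul_derivative_T_node (N := N) (by omega) k
  rw [eval_mul, node, eval_sub, eval_one, eval_pow, eval_X, ← sin_sq] at h
  exact (mul_eq_zero.mp h).resolve_left (pow_ne_zero 2 hsin)

theorem eval_derivative_one_sub_X_sq_mul_derivative_T_node {N k : ℕ} (hN : N ≠ 0)
    (hk : k ≤ N) :
    (derivative ((1 - X ^ 2) * derivative (T ℝ N))).eval (node N k) =
      -((if k = 0 ∨ k = N then 2 else 1) * N ^ 2 * (-1) ^ k) := by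
  have hT := eval_T_real_node (Finset.mem_Iic.mpr hk)
  split_ifs with hend
  · have hsq : node N k ^ 2 = 1 := by
      rcases hend with rfl | rfl <;> simp [node_eq_one, node_eq_neg_one hN]
    rw [eval_derivative_one_sub_X_sq_mul_derivative_T_of_sq_eq_one _ hsq, hT]
    push_cast
    ring
  · rw [derivative_one_sub_X_sq_mul_derivative_T, eval_sub, eval_neg, eval_mul, eval_mul,
      eval_derivative_T_node_eq_zero (by omega) (by omega), hT]
    simp

theorem neg_node {N j : ℕ} (hN : N ≠ 0) (hj : j ≤ N) : -node N j = node N (N - j) := by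
  rw [node, node, Nat.cast_sub hj, sub_mul, sub_div,
    mul_div_cancel_left₀ _ (Nat.cast_ne_zero.mpr hN), cos_pi_sub]

open Finset in
theorem nodalWeight_neg_node {N : ℕ} (hN : N ≠ 0) (j : Fin (N + 1)) :
    Lagrange.nodalWeight univ (fun n : Fin (N + 1) ↦ -node N n) j =
      (-1) ^ (N - j) * 2 ^ (N - 1) / ((if (j : ℕ) = 0 ∨ (j : ℕ) = N then 2 else 1) * N) := by
  have hneg (n : Fin (N + 1)) : -node N n = node N (N - n) := neg_node hN n.is_le
  have hmono : StrictMono (fun n : Fin (N + 1) ↦ -node N n) :=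
    fun a b hab ↦ neg_lt_neg (node_lt b.is_le hab)
  have hdeg : ((1 - X ^ 2) * derivative (T ℝ N)).degree =
      ((univ : Finset (Fin (N + 1))).card : WithBot ℕ) := by
    rw [card_univ, Fintype.card_fin, degree_one_sub_X_sq_mul_derivative_T hN]
  have hroot (n : Fin (N + 1)) (_ : n ∈ univ) :
      ((1 - X ^ 2) * derivative (T ℝ N)).eval (-node N n) = 0 := by
    rw [hneg]
    exact eval_one_sub_X_sq_mul_derivative_T_node hN _
  have hends : N - j = 0 ∨ N - j = N ↔ (j : ℕ) = 0 ∨ (j : ℕ) = N := by omega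
  rw [Lagrange.nodalWeight_eq_eval_derivative_nodal (mem_univ j),
    Lagrange.nodal_eq_C_inv_leadingCoeff_mul hmono.injective.injOn hdeg hroot, derivative_C_mul,
    eval_C_mul, leadingCoeff_one_sub_X_sq_mul_derivative_T hN, hneg,
    eval_derivative_one_sub_X_sq_mul_derivative_T_node hN (N.sub_le j), if_congr hends rfl rfl]
  have hr : (if (j : ℕ) = 0 ∨ (j : ℕ) = N then 2 else 1 : ℝ) ≠ 0 := by
    split_ifs <;> norm_num
  have hN' : (N : ℝ) ≠ 0 := Nat.cast_ne_zero.mpr hN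
  field_simp
  rw [← pow_mul, pow_mul', neg_one_sq, one_pow]

end Polynomial.Chebyshev

/-- explicit formula for the barycentric weights associated with the
Chebyshev points of the second kind. -/
theorem stmt_10 (N : ℕ) (hN : 1 ≤ N) (τ : Fin (N + 1) → ℝ)
    (hτ : ∀ j, τ j = -Real.cos ((j : ℝ) * π / (N : ℝ)))
    (ρ : Fin (N + 1) → ℝ)
    (hρ0 : ρ 0 = 2) (hρN : ρ (Fin.last N) = 2)
    (hρ : ∀ j : Fin (N + 1), 1 ≤ (j : ℕ) → (j : ℕ) ≤ N - 1 → ρ j = 1)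
    (j : Fin (N + 1)) :
    (∏ n ∈ Finset.univ.erase j, (τ j - τ n)⁻¹) =
      (-1 : ℝ) ^ (N - (j : ℕ)) * 2 ^ (N - 1) / (ρ j * N) := by
  obtain rfl : τ = fun n : Fin (N + 1) ↦ -Polynomial.Chebyshev.node N n := funext hτ
  have hρj : ρ j = if (j : ℕ) = 0 ∨ (j : ℕ) = N then 2 else 1 := by
    split_ifs with hends
    · rcases hends with h | h
      · rwa [show j = 0 from Fin.ext h]
      · rwa [show j = Fin.last N from Fin.ext h]
    · exact hρ j (by omega) (by omega)
  rw [hρj]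
  exact Polynomial.Chebyshev.nodalWeight_neg_node (by omega) j
end

section
/- Let T_n denote the n-th Chebyshev polynomial of the first kind, and define ∂_x^{-1}v(x) = ∫_{-1}^{x} v(t) dt and ∂_x^{-2}v(x) = ∂_x^{-1}(∂_x^{-1}v)(x). Then for all real x: (i) ∂_x^{-2}T_0(x) = (x+1)²/2; (ii) ∂_x^{-2}T_1(x) = (x-2)(x+1)²/6; (iii) ∂_x^{-2}T_2(x) = x(x-2)(x+1)²/6; and (iv) for every integer n ≥ 3, ∂_x^{-2}T_n(x) = T_{n+2}(x)/(4(n+1)(n+2)) - T_n(x)/(2(n²-1)) + T_{n-2}(x)/(4(n-1)(n-2)) - (-1)^n(1+x)/(n²-1) - 3(-1)^n/((n²-1)(n²-4)). -/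
/-!
Since `T_m' = m U_{m-1}` and `2 T_n = U_n - U_{n-2}`, the polynomial
`P_n = T_{n+1} / (2(n+1)) - T_{n-1} / (2(n-1))` is an antiderivative of `T_n`, and the same recipe applied
once more gives a second antiderivative `Q_n`, a combination of `T_{n+2}`, `T_n`, `T_{n-2}`. The
double integral from `-1` is then `Q_n(x) - Q_n(-1) - P_n(-1)(x + 1)`, and the constants come from
`T_k(-1) = (-1)^k`. With the convention `0⁻¹ = 0` the recipe stays valid for `n = ±1`, because
`U_{-1} = 0`; so the cases `n ≤ 2` are read off the same polynomials.
-/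

open Polynomial Polynomial.Chebyshev

theorem integral_integral_eq_of_hasDerivAt {f F G : ℝ → ℝ} (hG : ∀ t, HasDerivAt G (F t) t)
    (hF : ∀ t, HasDerivAt F (f t) t) (hf : Continuous f) (a x : ℝ) :
    ∫ t in a..x, ∫ s in a..t, f s = G x - G a - F a * (x - a) := by
  have inner (t : ℝ) : ∫ s in a..t, f s = F t - F a :=
    intervalIntegral.integral_eq_sub_of_hasDerivAt (fun s _ ↦ hF s) (hf.intervalIntegrable a t)
  have hG' (t : ℝ) : HasDerivAt (fun y ↦ G y - F a * y) (F t - F a) t :=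
    ((hG t).sub ((hasDerivAt_id' t).const_mul (F a))).congr_deriv (by ring)
  have hFc : Continuous F := continuous_iff_continuousAt.2 fun t ↦ (hF t).continuousAt
  simp_rw [inner]
  rw [intervalIntegral.integral_eq_sub_of_hasDerivAt (fun t _ ↦ hG' t)
    ((hFc.sub continuous_const).intervalIntegrable a x)]
  ring

theorem integral_integral_eval_eq {p P Q : ℝ[X]} (hP : derivative P = p) (hQ : derivative Q = P)
    (a x : ℝ) :
    ∫ t in a..x, ∫ s in a..t, p.eval s = Q.eval x - Q.eval a - P.eval a * (x - a) :=
  integral_integral_eq_of_hasDerivAt (fun t ↦ hQ ▸ Q.hasDerivAt t)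
    (fun t ↦ hP ▸ P.hasDerivAt t) p.continuous a x

namespace Polynomial.Chebyshev

variable (R : Type*) [Field R] [CharZero R]

noncomputable def antiderivT (n : ℤ) : R[X] :=
  (2 * (n + 1 : ℤ) : R)⁻¹ • T R (n + 1) - (2 * (n - 1 : ℤ) : R)⁻¹ • T R (n - 1)

noncomputable def antiderivT₂ (n : ℤ) : R[X] :=
  (2 * (n + 1 : ℤ) : R)⁻¹ • antiderivT R (n + 1) - (2 * (n - 1 : ℤ) : R)⁻¹ • antiderivT R (n - 1)

variable {R}

theorem inv_two_mul_smul_derivative_T (m : ℤ) :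
    (2 * m : R)⁻¹ • derivative (T R m) = (2 : R)⁻¹ • U R (m - 1) := by
  rcases eq_or_ne m 0 with rfl | hm
  · simp
  · rw [T_derivative_eq_U, ← C_eq_intCast, C_mul', smul_smul]
    congr 1
    field_simp

theorem derivative_antiderivT (n : ℤ) : derivative (antiderivT R n) = T R n := by
  rw [antiderivT, derivative_sub, derivative_smul, derivative_smul, inv_two_mul_smul_derivative_T,
    inv_two_mul_smul_derivative_T, add_sub_cancel_right, sub_sub, one_add_one_eq_two, ← smul_sub]
  have h := two_mul_T_eq_U_sub_U R (n - 2)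
  rw [sub_add_cancel] at h
  rw [← h, two_mul, ← two_smul R, smul_smul, inv_mul_cancel₀ two_ne_zero, one_smul]

theorem derivative_antiderivT₂ (n : ℤ) : derivative (antiderivT₂ R n) = antiderivT R n := by
  rw [antiderivT₂, derivative_sub, derivative_smul, derivative_smul, derivative_antiderivT,
    derivative_antiderivT, antiderivT]

theorem integral_integral_eval_T (n : ℤ) (a x : ℝ) :
    ∫ t in a..x, ∫ s in a..t, (T ℝ n).eval s =
      (antiderivT₂ ℝ n).eval x - (antiderivT₂ ℝ n).eval a - (antiderivT ℝ n).eval a * (x - a) :=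
  integral_integral_eval_eq (derivative_antiderivT n) (derivative_antiderivT₂ n) a x

theorem intCast_ne_zero_of_two_lt_abs {n : ℤ} (hn : 2 < |n|) :
    (n : R) ≠ 0 ∧ (n : R) + 1 ≠ 0 ∧ (n : R) - 1 ≠ 0 ∧ (n : R) + 2 ≠ 0 ∧ (n : R) - 2 ≠ 0 := by
  rw [lt_abs] at hn
  refine ⟨?_, ?_, ?_, ?_, ?_⟩ <;> norm_cast <;> omega

theorem eval_antiderivT₂ {n : ℤ} (hn : 2 < |n|) (x : R) :
    (antiderivT₂ R n).eval x =
      (T R (n + 2)).eval x / (4 * (n + 1) * (n + 2)) - (T R n).eval x / (2 * (n ^ 2 - 1)) +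
        (T R (n - 2)).eval x / (4 * (n - 1) * (n - 2)) := by
  obtain ⟨h₀, h₁, h₂, h₃, h₄⟩ := intCast_ne_zero_of_two_lt_abs (R := R) hn
  rw [show (n : R) ^ 2 - 1 = (n + 1) * (n - 1) by ring]
  simp only [antiderivT₂, antiderivT, eval_sub, eval_smul, smul_eq_mul, add_sub_cancel_right,
    sub_add_cancel, add_assoc, one_add_one_eq_two, sub_sub]
  push_cast
  field_simp
  ring

theorem eval_neg_one_antiderivT {n : ℤ} (hn : 1 < |n|) :
    (antiderivT R n).eval (-1) = n.negOnePow / (n ^ 2 - 1) := by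
  rw [lt_abs] at hn
  have h₁ : (n : R) + 1 ≠ 0 := by exact_mod_cast (by omega : n + 1 ≠ 0)
  have h₂ : (n : R) - 1 ≠ 0 := by exact_mod_cast (by omega : n - 1 ≠ 0)
  rw [show (n : R) ^ 2 - 1 = (n + 1) * (n - 1) by ring]
  simp only [antiderivT, eval_sub, eval_smul, smul_eq_mul, T_eval_neg_one, Int.negOnePow_add,
    Int.negOnePow_sub, Int.negOnePow_one]
  push_cast
  field_simp
  ring

theorem eval_neg_one_antiderivT₂ {n : ℤ} (hn : 2 < |n|) :
    (antiderivT₂ R n).eval (-1) = 3 * n.negOnePow / ((n ^ 2 - 1) * (n ^ 2 - 4)) := by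
  obtain ⟨h₀, h₁, h₂, h₃, h₄⟩ := intCast_ne_zero_of_two_lt_abs (R := R) hn
  rw [eval_antiderivT₂ hn, show (n : R) ^ 2 - 1 = (n + 1) * (n - 1) by ring,
    show (n : R) ^ 2 - 4 = (n + 2) * (n - 2) by ring]
  simp only [T_eval_neg_one, Int.negOnePow_add, Int.negOnePow_sub, Int.negOnePow_even _ even_two]
  push_cast
  field_simp
  ring

end Polynomial.Chebyshev

/-- formulas for the twice-iterated integral
`∂_x^{-2} T_n(x) = ∫_{-1}^x ∫_{-1}^t T_n(s) ds dt`. -/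
theorem stmt_13 (x : ℝ) :
    (∫ t in (-1 : ℝ)..x, ∫ s in (-1 : ℝ)..t, (Polynomial.Chebyshev.T ℝ 0).eval s) =
        (x + 1) ^ 2 / 2 ∧
    (∫ t in (-1 : ℝ)..x, ∫ s in (-1 : ℝ)..t, (Polynomial.Chebyshev.T ℝ 1).eval s) =
        (x - 2) * (x + 1) ^ 2 / 6 ∧
    (∫ t in (-1 : ℝ)..x, ∫ s in (-1 : ℝ)..t, (Polynomial.Chebyshev.T ℝ 2).eval s) =
        x * (x - 2) * (x + 1) ^ 2 / 6 ∧
    ∀ n : ℕ, 3 ≤ n →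
      (∫ t in (-1 : ℝ)..x, ∫ s in (-1 : ℝ)..t, (Polynomial.Chebyshev.T ℝ n).eval s) =
        (Polynomial.Chebyshev.T ℝ ((n : ℤ) + 2)).eval x /
            (4 * ((n : ℝ) + 1) * ((n : ℝ) + 2)) -
          (Polynomial.Chebyshev.T ℝ n).eval x / (2 * ((n : ℝ) ^ 2 - 1)) +
          (Polynomial.Chebyshev.T ℝ ((n : ℤ) - 2)).eval x /
            (4 * ((n : ℝ) - 1) * ((n : ℝ) - 2)) -
          (-1 : ℝ) ^ n * (1 + x) / ((n : ℝ) ^ 2 - 1) -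
          3 * (-1 : ℝ) ^ n / (((n : ℝ) ^ 2 - 1) * ((n : ℝ) ^ 2 - 4)) := by
  have h₃ : T ℝ 3 = 2 * X * T ℝ 2 - T ℝ 1 := T_add_two ℝ 1
  have h₄ : T ℝ 4 = 2 * X * T ℝ 3 - T ℝ 2 := T_add_two ℝ 2
  refine ⟨?_, ?_, ?_, fun n hn ↦ ?_⟩
  · rw [integral_integral_eval_T]
    norm_num [antiderivT₂, antiderivT, T_two]
    ring
  · rw [integral_integral_eval_T]
    norm_num [antiderivT₂, antiderivT, h₃, T_two]
    ring
  · rw [integral_integral_eval_T]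
    norm_num [antiderivT₂, antiderivT, h₄, h₃, T_two]
    ring
  · have hn' : 2 < |(n : ℤ)| := by rw [lt_abs]; omega
    rw [integral_integral_eval_T, eval_neg_one_antiderivT₂ hn',
      eval_neg_one_antiderivT (hn'.trans' one_lt_two), eval_antiderivT₂ hn']
    push_cast
    rw [Int.cast_negOnePow_natCast]
    ring
end

section
/- Let N ≥ 1, let τ_{j,N} = -cos(jπ/N) for j = 0, ..., N be the Chebyshev points of the second kind, set ρ_0 = ρ_N = 2 and ρ_j = 1 for 1 ≤ j ≤ N-1, and let ℓ_{j,N}^τ be the Lagrange basis polynomials associated with these points. Let T_k denote the k-th Chebyshev polynomial of the first kind. Then for every j = 0, ..., N and all real x, ℓ_{j,N}^τ(x) = (1/(ρ_j N))·T_0(x) + Σ_{k=1}^{N-1} (2T_k(τ_{j,N})/(ρ_j N))·T_k(x) + ((-1)^{N-j}/(ρ_j N))·T_N(x). -/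
/-!
Up to reindexing `j ↦ N - j`, the nodes are the Chebyshev extrema `cos (bπ/N)`, at which `T_k`
takes the value `cos (kbπ/N)`. The right-hand side is `(ρ_j N)⁻¹ K_N(τ_j, x)` for the polynomial
kernel `K_N(y, ·) = 1 + 2 ∑_{k=1}^{N-1} T_k(y) T_k + T_N(y) T_N` of degree at most `N`. The
trapezoidal sum of `cos (mθ)` over the points `θ = kπ/N` vanishes unless `2N ∣ m`; via
`2 cos α cos β = cos (α + β) + cos (α - β)` this gives the discrete orthogonality
`K_N(τ_j, τ_i) = ρ_j N δ_ij`. So both sides of the identity have degree at most `N` and agree at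
the `N + 1` nodes, hence coincide.
-/

open Polynomial Polynomial.Chebyshev Real Finset

theorem sum_cos_trapezoid_eq {N : ℕ} (hN : N ≠ 0) (m : ℤ) :
    1 + 2 * ∑ k ∈ Icc 1 (N - 1), cos (k * (m * π / N)) + cos (N * (m * π / N)) =
      if 2 * (N : ℤ) ∣ m then 2 * (N : ℝ) else 0 := by
  set θ := m * π / N with hθ
  have hNθ : N * θ = m * π := by rw [hθ]; field_simp
  have hIcc : ∑ k ∈ Icc 1 (N - 1), cos (k * θ) = ∑ k ∈ range N, cos (k * θ) - 1 := by
    rw [show Icc 1 (N - 1) = Ico 1 N by ext; simp; omega, sum_Ico_eq_sub _ (by omega)]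
    simp
  rw [hIcc, hNθ]
  split_ifs with hdvd
  · obtain ⟨t, rfl⟩ := hdvd
    have hone (k : ℕ) : cos (k * θ) = 1 := by
      rw [hθ, show (k : ℝ) * (((2 * N * t : ℤ) : ℝ) * π / N) = ((k * t : ℤ) : ℝ) * (2 * π) by
        push_cast; field_simp]
      exact cos_int_mul_two_pi _
    simp only [hone, ← hNθ, sum_const, card_range, nsmul_eq_mul]
    ring
  · have hsin : sin (θ / 2) ≠ 0 := by
      rw [sin_ne_zero_iff]
      rintro n hn
      refine hdvd ⟨n, ?_⟩
      rw [hθ, div_div, eq_div_iff (by positivity)] at hn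
      have : (m : ℝ) = 2 * N * n := mul_right_cancel₀ pi_ne_zero (by rw [← hn]; ring)
      exact_mod_cast this
    -- `sin (θ/2) ∑_{k<N} cos (kθ) = sin (mπ/2) cos ((mπ - θ)/2)`, which is
    -- `sin² (mπ/2) sin (θ/2)` because `sin (mπ) = 0`.
    have hsum := sin_mul_sum_cos N θ 0
    simp only [add_zero, mul_comm θ] at hsum
    rw [hNθ, sub_mul, one_mul, hNθ, sub_div, cos_sub] at hsum
    have h2 : 2 * sin (m * π / 2) * cos (m * π / 2) = 0 := by
      rw [← sin_two_mul, mul_div_cancel₀ _ two_ne_zero, sin_int_mul_pi]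
    have h3 := cos_sq (m * π / 2)
    rw [mul_div_cancel₀ _ two_ne_zero, cos_sq'] at h3
    have : sin (θ / 2) * (1 + 2 * (∑ k ∈ range N, cos (k * θ) - 1) + cos (m * π)) = 0 := by
      linear_combination 2 * hsum + cos (θ / 2) * h2 - 2 * sin (θ / 2) * h3
    simpa [hsin] using this

noncomputable def chebyshevKernel (N : ℕ) (y : ℝ) : ℝ[X] :=
  1 + ∑ k ∈ Icc 1 (N - 1), C (2 * (T ℝ k).eval y) * T ℝ k + C ((T ℝ N).eval y) * T ℝ N

theorem natDegree_chebyshevKernel_le (N : ℕ) (y : ℝ) : (chebyshevKernel N y).natDegree ≤ N := by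
  have hT (k : ℕ) (c : ℝ) : (C c * T ℝ k).natDegree ≤ k :=
    (natDegree_C_mul_le _ _).trans (by rw [natDegree_T]; simp)
  refine natDegree_add_le_of_degree_le (natDegree_add_le_of_degree_le (by simp) ?_) (hT N _)
  exact natDegree_sum_le_of_forall_le _ _ fun k hk => (hT k _).trans (by simp at hk; omega)

theorem eval_chebyshevKernel (N : ℕ) (y x : ℝ) :
    (chebyshevKernel N y).eval x =
      1 + ∑ k ∈ Icc 1 (N - 1), 2 * (T ℝ k).eval y * (T ℝ k).eval x +
        (T ℝ N).eval y * (T ℝ N).eval x := by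
  simp only [chebyshevKernel, eval_add, eval_one, eval_finsetSum, eval_mul, eval_C]

theorem node_sub {N i : ℕ} (hN : N ≠ 0) (hi : i ≤ N) : node N (N - i) = -node N i := by
  rw [node, node, Nat.cast_sub hi, sub_mul, sub_div, mul_div_cancel_left₀ _ (by positivity),
    cos_pi_sub]

theorem eval_node_chebyshevKernel_node {N a b : ℕ} (hN : N ≠ 0) (ha : a ≤ N) (hb : b ≤ N) :
    (chebyshevKernel N (node N b)).eval (node N a) =
      if a = b then (if a = 0 ∨ a = N then 2 else 1) * (N : ℝ) else 0 := by
  have hprod (k : ℕ) : 2 * (T ℝ k).eval (node N b) * (T ℝ k).eval (node N a) =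
      cos (k * (((a + b : ℤ) : ℝ) * π / N)) + cos (k * (((b - a : ℤ) : ℝ) * π / N)) := by
    rw [node, node, T_real_cos, T_real_cos, two_mul_cos_mul_cos]
    push_cast
    ring_nf
  have hdvd_sub : 2 * (N : ℤ) ∣ b - a ↔ a = b := by
    refine ⟨fun h => ?_, fun h => by simp [h]⟩
    have := Int.eq_zero_of_abs_lt_dvd h (by rw [abs_lt]; omega)
    omega
  have hdvd_add : 2 * (N : ℤ) ∣ a + b ↔ a + b = 0 ∨ a + b = 2 * N := by
    refine ⟨fun h => ?_, ?_⟩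
    · rcases (show a + b < 2 * N ∨ a + b = 2 * N by omega) with hlt | heq
      · have := Int.eq_zero_of_abs_lt_dvd h (by rw [abs_lt]; omega)
        omega
      · exact .inr heq
    · rintro (h | h) <;> [simp [show a = 0 by omega, show b = 0 by omega]; exact ⟨1, by omega⟩]
  have hadd := sum_cos_trapezoid_eq hN (a + b)
  have hsub := sum_cos_trapezoid_eq hN (b - a)
  simp only [hdvd_add, hdvd_sub] at hadd hsub
  simp only [eval_chebyshevKernel, hprod, sum_add_distrib]
  have := hprod N
  split_ifs at * <;> first | omega | linarith

theorem eq_C_mul_chebyshevKernel_of_eval_node {N b : ℕ} (hN : N ≠ 0) (hb : b ≤ N) {p : ℝ[X]}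
    (hp : p.natDegree ≤ N) (hval : ∀ a ≤ N, p.eval (node N a) = if a = b then 1 else 0) :
    p = C ((if b = 0 ∨ b = N then 2 else 1) * (N : ℝ))⁻¹ * chebyshevKernel N (node N b) := by
  have hinj : Function.Injective fun a : Fin (N + 1) => node N a := fun a a' h =>
    Fin.ext ((strictAntiOn_node N).injOn (by simp; omega) (by simp; omega) h)
  refine eq_of_natDegree_lt_card_of_eval_eq _ _ hinj (fun a => ?_) ?_
  · rw [hval a (by omega), eval_mul, eval_C, eval_node_chebyshevKernel_node hN (by omega) hb]
    by_cases hab : (a : ℕ) = b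
    · subst hab
      rw [if_pos rfl, if_pos rfl, inv_mul_cancel₀ (by positivity)]
    · rw [if_neg hab, if_neg hab, mul_zero]
  · rw [Fintype.card_fin, Nat.lt_succ_iff]
    exact max_le hp ((natDegree_C_mul_le _ _).trans (natDegree_chebyshevKernel_le N _))

/-- Chebyshev expansion of the Lagrange basis polynomials associated
with the Chebyshev points of the second kind. -/
theorem stmt_15 (N : ℕ) (hN : 1 ≤ N) (τ : Fin (N + 1) → ℝ)
    (hτ : ∀ j, τ j = -Real.cos ((j : ℝ) * π / (N : ℝ)))
    (ρ : Fin (N + 1) → ℝ)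
    (hρ0 : ρ 0 = 2) (hρN : ρ (Fin.last N) = 2)
    (hρ : ∀ j : Fin (N + 1), 1 ≤ (j : ℕ) → (j : ℕ) ≤ N - 1 → ρ j = 1)
    (ℓ : Fin (N + 1) → Polynomial ℝ)
    (hdeg : ∀ j, (ℓ j).natDegree ≤ N)
    (hval : ∀ i j, (ℓ j).eval (τ i) = if i = j then 1 else 0)
    (j : Fin (N + 1)) (x : ℝ) :
    (ℓ j).eval x =
      (1 / (ρ j * N)) * (Polynomial.Chebyshev.T ℝ 0).eval x +
        (∑ k ∈ Finset.Icc 1 (N - 1),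
          (2 * (Polynomial.Chebyshev.T ℝ (k : ℤ)).eval (τ j) / (ρ j * N)) *
            (Polynomial.Chebyshev.T ℝ (k : ℤ)).eval x) +
        ((-1 : ℝ) ^ (N - (j : ℕ)) / (ρ j * N)) *
          (Polynomial.Chebyshev.T ℝ (N : ℤ)).eval x := by
  have hN0 : N ≠ 0 := by omega
  have hτ_node (i : Fin (N + 1)) : τ i = node N (N - i) := by
    rw [hτ, node_sub hN0 (by omega), node]
  have hρj : ρ j = if N - j = 0 ∨ N - j = N then 2 else 1 := by
    split_ifs with h
    · rcases h with h | h
      · rw [show j = Fin.last N by ext; simp; omega, hρN]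
      · rw [show j = 0 from Fin.ext (by rw [Fin.val_zero]; omega), hρ0]
    · exact hρ j (by omega) (by omega)
  have hℓ : ℓ j = C (ρ j * N)⁻¹ * chebyshevKernel N (τ j) := by
    rw [hρj, hτ_node]
    refine eq_C_mul_chebyshevKernel_of_eval_node hN0 (by omega) (hdeg j) fun a ha => ?_
    have hval_a := hval ⟨N - a, by omega⟩ j
    rw [hτ_node, Fin.val_mk, Nat.sub_sub_self ha] at hval_a
    exact hval_a.trans (if_congr (by simp [Fin.ext_iff]; omega) rfl rfl)
  have hsign : (-1 : ℝ) ^ (N - (j : ℕ)) = (T ℝ N).eval (τ j) := by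
    rw [hτ_node, eval_T_real_node (mem_Iic.2 (Nat.sub_le _ _))]
  rw [hℓ, eval_mul, eval_C, eval_chebyshevKernel, hsign, T_zero, eval_one, mul_add, mul_add,
    mul_sum]
  congr 1
  · exact congr($(by ring) + $(sum_congr rfl fun k _ => by ring))
  · ring
end

section
/- Let -1 ≤ y_0 < y_1 < ... < y_M ≤ 1 be distinct real points with Lagrange basis polynomials ℓ_{j,M}, let a, b ∈ ℝ with a + b ≠ 0, and let c_0, ..., c_{M+1} ∈ ℝ. Define p(x) = Σ_{j=0}^{M} c_j·[∂_x^{-1}ℓ_{j,M}(x) - (b/(a+b))·∫_{-1}^{1} ℓ_{j,M}(t) dt] + c_{M+1}/(a+b). Then p is a polynomial of degree at most M+1 satisfying p'(y_j) = c_j for j = 0, ..., M and a·p(-1) + b·p(1) = c_{M+1}; moreover, p is the unique polynomial of degree at most M+1 with these properties. -/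
open Polynomial

/-!
The derivative of the interpolant is forced to be the Lagrange interpolant `L = ∑ c_j ℓ_j` of
the data `c_j`, so `p` is an antiderivative of `L`, and the free additive constant `k` enters the
boundary functional as `(a + b) k`; since `a + b ≠ 0` it is fixed by `a p(-1) + b p(1) = c_{M+1}`.
For uniqueness, two solutions differ by a polynomial whose derivative has degree `≤ M` and
`M + 1` roots, hence by a constant, which the boundary condition kills.
-/

namespace Polynomial

section Antideriv

variable {K : Type*} [Field K]

noncomputable def antideriv (p : K[X]) : K[X] :=
  p.sum fun k a => C (a / (k + 1)) * X ^ (k + 1)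

theorem derivative_antideriv [CharZero K] (p : K[X]) : derivative (antideriv p) = p := by
  conv_rhs => rw [← p.sum_C_mul_X_pow_eq]
  rw [antideriv, Polynomial.sum, Polynomial.sum, map_sum]
  refine Finset.sum_congr rfl fun k _ => ?_
  have hk : ((k : K) + 1) ≠ 0 := Nat.cast_add_one_ne_zero k
  rw [derivative_C_mul, derivative_X_pow, ← mul_assoc, ← C_mul, Nat.add_sub_cancel]
  congr 2
  push_cast
  exact div_mul_cancel₀ _ hk

theorem natDegree_antideriv_le (p : K[X]) : (antideriv p).natDegree ≤ p.natDegree + 1 := by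
  refine natDegree_sum_le_of_forall_le _ _ fun k hk => (natDegree_C_mul_le _ _).trans ?_
  rw [natDegree_X_pow]
  exact Nat.add_le_add_right (le_natDegree_of_mem_supp _ hk) 1

end Antideriv

theorem intervalIntegral_eval_eq_sub (p : ℝ[X]) (u v : ℝ) :
    ∫ t in u..v, p.eval t = (antideriv p).eval v - (antideriv p).eval u := by
  refine intervalIntegral.integral_eq_sub_of_hasDerivAt (f := fun x => (antideriv p).eval x)
    (fun x _ => ?_)
    (p.continuous.intervalIntegrable u v)
  simpa only [derivative_antideriv] using (antideriv p).hasDerivAt x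

theorem intervalIntegral_eval_sum_C_mul {ι : Type*} (s : Finset ι) (c : ι → ℝ) (p : ι → ℝ[X])
    (u v : ℝ) :
    ∫ t in u..v, (∑ j ∈ s, C (c j) * p j).eval t = ∑ j ∈ s, c j * ∫ t in u..v, (p j).eval t := by
  simp only [eval_finsetSum, eval_mul, eval_C]
  rw [intervalIntegral.integral_finsetSum fun j _ => (by fun_prop : Continuous fun t =>
    c j * (p j).eval t).intervalIntegrable u v]
  simp only [intervalIntegral.integral_const_mul]

theorem eval_sum_C_mul_of_eval_eq_ite {R ι : Type*} [CommRing R] [Fintype ι] [DecidableEq ι]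
    {y : ι → R} {ℓ : ι → R[X]} (hval : ∀ i j, (ℓ j).eval (y i) = if i = j then 1 else 0)
    (c : ι → R) (i : ι) : (∑ j, C (c j) * ℓ j).eval (y i) = c i := by
  simp [eval_finsetSum, hval]

theorem exists_derivative_eq_and_boundary_eq (L : ℝ[X]) {a b : ℝ} (hab : a + b ≠ 0)
    (u v γ : ℝ) :
    ∃ q : ℝ[X],
      (∀ x, q.eval x =
        (∫ t in u..x, L.eval t) - b / (a + b) * (∫ t in u..v, L.eval t) + γ / (a + b)) ∧
      q.natDegree ≤ L.natDegree + 1 ∧ derivative q = L ∧ a * q.eval u + b * q.eval v = γ := by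
  set A := antideriv L
  set q := A + C (γ / (a + b) - A.eval u - b / (a + b) * (A.eval v - A.eval u))
  have hq : ∀ x, q.eval x =
      (∫ t in u..x, L.eval t) - b / (a + b) * (∫ t in u..v, L.eval t) + γ / (a + b) := by
    intro x
    simp only [q, eval_add, eval_C, intervalIntegral_eval_eq_sub]
    ring
  refine ⟨q, hq, ?_, ?_, ?_⟩
  · rw [natDegree_add_C]
    exact natDegree_antideriv_le L
  · rw [derivative_add, derivative_C, add_zero, derivative_antideriv]
  · rw [hq, hq, intervalIntegral.integral_same]
    field_simp
    ring

theorem eq_of_derivative_eval_eq_of_boundary_eq {K ι : Type*} [Field K] [CharZero K]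
    [Fintype ι] {y : ι → K} (hy : Function.Injective y) {p q : K[X]}
    (hp : p.natDegree ≤ Fintype.card ι) (hq : q.natDegree ≤ Fintype.card ι)
    (hder : ∀ i, (derivative p).eval (y i) = (derivative q).eval (y i))
    {a b u v : K} (hab : a + b ≠ 0)
    (hbd : a * p.eval u + b * p.eval v = a * q.eval u + b * q.eval v) : p = q := by
  have hderiv : derivative (p - q) = 0 := by
    by_cases h0 : (p - q).natDegree = 0
    · exact derivative_of_natDegree_zero h0
    refine eq_zero_of_natDegree_lt_card_of_eval_eq_zero _ hy (fun i => by simp [hder i]) ?_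
    exact (natDegree_derivative_lt h0).trans_le ((natDegree_sub_le _ _).trans (max_le hp hq))
  have hconst : p - q = C ((p - q).coeff 0) := eq_C_of_derivative_eq_zero hderiv
  have hk : (a + b) * (p - q).coeff 0 = 0 := by
    have hpq : p = q + C ((p - q).coeff 0) := by rw [← hconst]; ring
    rw [hpq] at hbd
    simp only [eval_add, eval_C] at hbd
    linear_combination hbd
  rw [← sub_eq_zero, hconst, (mul_eq_zero.mp hk).resolve_left hab, map_zero]

end Polynomial

theorem stmt_16_general (M : ℕ) (y : Fin (M + 1) → ℝ)
    (hy : StrictMono y)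
    (ℓ : Fin (M + 1) → Polynomial ℝ)
    (hdeg : ∀ j, (ℓ j).natDegree ≤ M)
    (hval : ∀ i j, (ℓ j).eval (y i) = if i = j then 1 else 0)
    (a b : ℝ) (hab : a + b ≠ 0)
    (c : Fin (M + 1) → ℝ) (cM1 : ℝ) :
    ∃ q : Polynomial ℝ,
      (∀ x : ℝ, q.eval x =
        (∑ j : Fin (M + 1), c j *
          ((∫ t in (-1 : ℝ)..x, (ℓ j).eval t) -
            (b / (a + b)) * ∫ t in (-1 : ℝ)..1, (ℓ j).eval t)) +
          cM1 / (a + b)) ∧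
      q.natDegree ≤ M + 1 ∧
      (∀ j, (Polynomial.derivative q).eval (y j) = c j) ∧
      (a * q.eval (-1) + b * q.eval 1 = cM1) ∧
      (∀ r : Polynomial ℝ, r.natDegree ≤ M + 1 →
        (∀ j, (Polynomial.derivative r).eval (y j) = c j) →
        a * r.eval (-1) + b * r.eval 1 = cM1 → r = q) := by
  set L := ∑ j, C (c j) * ℓ j
  have hLdeg : L.natDegree ≤ M :=
    natDegree_sum_le_of_forall_le _ _ fun j _ => (natDegree_C_mul_le _ _).trans (hdeg j)
  obtain ⟨q, hq_eval, hq_deg, hq_der, hq_bd⟩ :=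
    exists_derivative_eq_and_boundary_eq L hab (-1) 1 cM1
  have hq_der_y : ∀ j, (derivative q).eval (y j) = c j := fun j => by
    rw [hq_der, eval_sum_C_mul_of_eval_eq_ite hval]
  refine ⟨q, fun x => ?_, hq_deg.trans (by omega), hq_der_y, hq_bd, fun r hr_deg hr_der hr_bd => ?_⟩
  · rw [hq_eval, intervalIntegral_eval_sum_C_mul, intervalIntegral_eval_sum_C_mul, Finset.mul_sum,
      ← Finset.sum_sub_distrib]
    congr 1
    exact Finset.sum_congr rfl fun j _ => by ring
  · refine eq_of_derivative_eval_eq_of_boundary_eq hy.injective ?_ ?_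
      (fun j => by rw [hr_der, hq_der_y]) hab (hr_bd.trans hq_bd.symm)
    · rwa [Fintype.card_fin]
    · rw [Fintype.card_fin]; omega

/-- explicit solution (and its uniqueness) of the first-order
Birkhoff-type interpolation problem with the constraint `a·p(-1) + b·p(1) = c_{M+1}`. -/
theorem stmt_16 (M : ℕ) (y : Fin (M + 1) → ℝ)
    (hy : StrictMono y) (hy0 : -1 ≤ y 0) (hyM : y (Fin.last M) ≤ 1)
    (ℓ : Fin (M + 1) → Polynomial ℝ)
    (hdeg : ∀ j, (ℓ j).natDegree ≤ M)
    (hval : ∀ i j, (ℓ j).eval (y i) = if i = j then 1 else 0)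
    (a b : ℝ) (hab : a + b ≠ 0)
    (c : Fin (M + 1) → ℝ) (cM1 : ℝ) :
    ∃ q : Polynomial ℝ,
      (∀ x : ℝ, q.eval x =
        (∑ j : Fin (M + 1), c j *
          ((∫ t in (-1 : ℝ)..x, (ℓ j).eval t) -
            (b / (a + b)) * ∫ t in (-1 : ℝ)..1, (ℓ j).eval t)) +
          cM1 / (a + b)) ∧
      q.natDegree ≤ M + 1 ∧
      (∀ j, (Polynomial.derivative q).eval (y j) = c j) ∧
      (a * q.eval (-1) + b * q.eval 1 = cM1) ∧
      (∀ r : Polynomial ℝ, r.natDegree ≤ M + 1 →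
        (∀ j, (Polynomial.derivative r).eval (y j) = c j) →
        a * r.eval (-1) + b * r.eval 1 = cM1 → r = q) :=
  stmt_16_general M y hy ℓ hdeg hval a b hab c cM1
end

section
/- Let -1 ≤ y_0 < y_1 < ... < y_M ≤ 1 be distinct real points with Lagrange basis polynomials ℓ_{j,M}, and let c_0, ..., c_{M+1} ∈ ℝ. Define p(x) = Σ_{j=0}^{M} c_j·[∂_x^{-1}ℓ_{j,M}(x) - (1/2)·∫_{-1}^{1} ∂_t^{-1}ℓ_{j,M}(t) dt] + c_{M+1}/2. Then p is a polynomial of degree at most M+1 satisfying p'(y_j) = c_j for j = 0, ..., M and ∫_{-1}^{1} p(x) dx = c_{M+1}; moreover, p is the unique polynomial of degree at most M+1 with these properties. -/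
open Polynomial intervalIntegral

noncomputable def antider (P : Polynomial ℝ) : Polynomial ℝ :=
  ∑ n ∈ Finset.range (P.natDegree + 1), C (P.coeff n / (n + 1)) * X ^ (n + 1)

lemma antider_deriv (P : Polynomial ℝ) : derivative (antider P) = P := by
  rw [antider, map_sum]
  conv_rhs => rw [P.as_sum_range' (P.natDegree + 1) (Nat.lt_succ_self _)]
  refine Finset.sum_congr rfl fun n _ => ?_
  rw [derivative_C_mul, derivative_X_pow, Nat.add_sub_cancel, ← mul_assoc, ← C_mul,
    show P.coeff n / ((n:ℝ)+1) * ((n+1:ℕ):ℝ) = P.coeff n by push_cast; field_simp, C_mul_X_pow_eq_monomial]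

lemma antider_natDegree (P : Polynomial ℝ) : (antider P).natDegree ≤ P.natDegree + 1 := by
  refine (Polynomial.natDegree_sum_le _ _).trans ?_
  simp only [Finset.fold_max_le]
  constructor
  · exact Nat.zero_le _
  intro n hn
  exact (Polynomial.natDegree_C_mul_le _ _).trans
    ((Polynomial.natDegree_X_pow_le _).trans (Finset.mem_range.mp hn))

lemma integral_eval (P : Polynomial ℝ) (a x : ℝ) :
    (∫ t in a..x, P.eval t) = (antider P).eval x - (antider P).eval a := by
  have h1 : ∀ t ∈ Set.uIcc a x, HasDerivAt (fun u => (antider P).eval u) (P.eval t) t := by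
    intro t _
    have := (antider P).hasDerivAt t
    rwa [antider_deriv] at this
  exact intervalIntegral.integral_eq_sub_of_hasDerivAt h1 (P.continuous.intervalIntegrable _ _)

/-- explicit solution (and its uniqueness) of the first-order
Birkhoff-type interpolation problem with the constraint `∫_{-1}^1 p = c_{M+1}`. -/
theorem stmt_17 (M : ℕ) (y : Fin (M + 1) → ℝ)
    (hy : StrictMono y) (hy0 : -1 ≤ y 0) (hyM : y (Fin.last M) ≤ 1)
    (ℓ : Fin (M + 1) → Polynomial ℝ)
    (hdeg : ∀ j, (ℓ j).natDegree ≤ M)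
    (hval : ∀ i j, (ℓ j).eval (y i) = if i = j then 1 else 0)
    (c : Fin (M + 1) → ℝ) (cM1 : ℝ) :
    ∃ q : Polynomial ℝ,
      (∀ x : ℝ, q.eval x =
        (∑ j : Fin (M + 1), c j *
          ((∫ t in (-1 : ℝ)..x, (ℓ j).eval t) -
            (1 / 2) * ∫ t in (-1 : ℝ)..1, (∫ s in (-1 : ℝ)..t, (ℓ j).eval s))) +
          cM1 / 2) ∧
      q.natDegree ≤ M + 1 ∧
      (∀ j, (Polynomial.derivative q).eval (y j) = c j) ∧
      ((∫ x in (-1 : ℝ)..1, q.eval x) = cM1) ∧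
      (∀ r : Polynomial ℝ, r.natDegree ≤ M + 1 →
        (∀ j, (Polynomial.derivative r).eval (y j) = c j) →
        (∫ x in (-1 : ℝ)..1, r.eval x) = cM1 → r = q) := by
  obtain ⟨A, hA⟩ : ∃ A : Fin (M + 1) → Polynomial ℝ, A = fun j => antider (ℓ j) := ⟨_, rfl⟩
  set I : Fin (M + 1) → ℝ :=
    fun j => ∫ t in (-1 : ℝ)..1, (∫ s in (-1 : ℝ)..t, (ℓ j).eval s) with hI
  set q : Polynomial ℝ :=
    (∑ j : Fin (M + 1), C (c j) * (A j - C ((A j).eval (-1) + I j / 2))) + C (cM1 / 2)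
    with hqdef
  have hqeval : ∀ x : ℝ, q.eval x =
      (∑ j : Fin (M + 1), c j * ((A j).eval x - ((A j).eval (-1) + I j / 2))) + cM1 / 2 := by
    intro x
    simp [hqdef, eval_finset_sum]
  have hform : ∀ x : ℝ, q.eval x =
      (∑ j : Fin (M + 1), c j *
        ((∫ t in (-1 : ℝ)..x, (ℓ j).eval t) - (1 / 2) * I j)) + cM1 / 2 := by
    intro x
    rw [hqeval]
    congr 1
    refine Finset.sum_congr rfl fun j _ => ?_
    rw [integral_eval, hA]
    ring
  have hqdeg : q.natDegree ≤ M + 1 := by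
    refine (natDegree_add_le _ _).trans ?_
    simp only [natDegree_C, max_le_iff]
    refine ⟨(Polynomial.natDegree_sum_le _ _).trans ?_, Nat.zero_le _⟩
    simp only [Finset.fold_max_le]
    refine ⟨Nat.zero_le _, fun j _ => ?_⟩
    refine (Polynomial.natDegree_mul_le).trans ?_
    simp only [natDegree_C, zero_add]
    refine (Polynomial.natDegree_sub_le _ _).trans ?_
    simp only [natDegree_C, max_le_iff]
    refine ⟨?_, Nat.zero_le _⟩
    rw [hA]
    exact (antider_natDegree _).trans (by have := hdeg j; omega)
  have hqder : ∀ i, (derivative q).eval (y i) = c i := by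
    intro i
    have hdq : derivative q = ∑ j : Fin (M + 1), C (c j) * ℓ j := by
      rw [hqdef, map_add, derivative_C, add_zero, map_sum]
      refine Finset.sum_congr rfl fun j _ => ?_
      rw [derivative_C_mul, map_sub, derivative_C, sub_zero, hA, antider_deriv]
    rw [hdq, eval_finset_sum]
    simp only [eval_mul, eval_C, hval, mul_ite, mul_one, mul_zero,
      Finset.sum_ite_eq, Finset.mem_univ, if_true]
  have hqint : (∫ x in (-1:ℝ)..1, q.eval x) = cM1 := by
    have hIj : ∀ j, I j = (∫ t in (-1 : ℝ)..1, (A j).eval t) - 2 * (A j).eval (-1) := by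
      intro j
      have h1 : I j = ∫ t in (-1 : ℝ)..1, ((A j).eval t - (A j).eval (-1)) :=
        intervalIntegral.integral_congr (fun t _ => by rw [hA]; exact integral_eval _ _ _)
      rw [h1, intervalIntegral.integral_sub ((A j).continuous.intervalIntegrable _ _)
        intervalIntegrable_const, intervalIntegral.integral_const]
      simp only [smul_eq_mul]; ring
    rw [intervalIntegral.integral_congr (g := fun x =>
      (∑ j : Fin (M + 1), c j * ((A j).eval x - ((A j).eval (-1) + I j / 2))) + cM1 / 2)
      (fun x _ => hqeval x)]
    have hint : ∀ j : Fin (M+1), IntervalIntegrable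
        (fun x => c j * ((A j).eval x - ((A j).eval (-1) + I j / 2)))
        MeasureTheory.volume (-1) 1 :=
      fun j => (continuous_const.mul ((A j).continuous.sub continuous_const)).intervalIntegrable _ _
    have hsum : IntervalIntegrable
        (fun x => ∑ j : Fin (M+1), c j * ((A j).eval x - ((A j).eval (-1) + I j / 2)))
        MeasureTheory.volume (-1) 1 :=
      (continuous_finset_sum _ (fun j _ =>
        continuous_const.mul ((A j).continuous.sub continuous_const))).intervalIntegrable _ _
    rw [intervalIntegral.integral_add hsum intervalIntegrable_const,
      intervalIntegral.integral_finset_sum (fun j _ => hint j),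
      intervalIntegral.integral_const]
    have hz : ∀ j : Fin (M+1),
        (∫ x in (-1:ℝ)..1, c j * ((A j).eval x - ((A j).eval (-1) + I j / 2))) = 0 := by
      intro j
      rw [intervalIntegral.integral_const_mul,
        intervalIntegral.integral_sub ((A j).continuous.intervalIntegrable _ _)
          intervalIntegrable_const, intervalIntegral.integral_const, hIj j]
      simp only [smul_eq_mul]; ring
    simp only [hz, Finset.sum_const_zero, smul_eq_mul]
    ring
  refine ⟨q, hform, hqdeg, hqder, hqint, ?_⟩
  intro r hrdeg hrder hrint
  have hd0 : derivative (r - q) = 0 := by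
    apply Polynomial.eq_zero_of_natDegree_lt_card_of_eval_eq_zero _ hy.injective
    · intro i
      rw [map_sub, eval_sub, hrder i, hqder i, sub_self]
    · rw [Fintype.card_fin]
      have h1 : (r - q).natDegree ≤ M + 1 :=
        (natDegree_sub_le _ _).trans (max_le hrdeg hqdeg)
      have := Polynomial.natDegree_derivative_le (r - q)
      omega
  have hC : r - q = C ((r - q).coeff 0) :=
    Polynomial.eq_C_of_natDegree_eq_zero
      (Polynomial.natDegree_eq_zero_of_derivative_eq_zero hd0)
  have hint0 : (∫ x in (-1:ℝ)..1, (r - q).eval x) = 0 := by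
    rw [intervalIntegral.integral_congr
      (g := fun x => r.eval x - q.eval x) (fun x _ => by simp)]
    rw [intervalIntegral.integral_sub (r.continuous.intervalIntegrable _ _)
      (q.continuous.intervalIntegrable _ _), hrint, hqint, sub_self]
  rw [hC] at hint0
  simp only [eval_C, intervalIntegral.integral_const, smul_eq_mul] at hint0
  have hc0 : (r - q).coeff 0 = 0 := by linarith
  rw [hc0, map_zero, sub_eq_zero] at hC
  exact hC
end
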